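/- Let h and k be positive integers with h dividing k and k ≥ 2, and let (b_n) be the strategy constructed by the k-parallel Universal Portfolio algorithm with μ the uniform density on B^m. Then for every infinite sequence of return vectors with positive entries, limsup_{n→∞} max over (b^1,...,b^h) ∈ B^{m×h} of (W_n(b_n^h) − W_n(b_n)) ≤ 0. -/

import Mathlib

open MeasureTheory Filter

noncomputable section

/-- Scalar product of a portfolio with a return vector. -/
def dot {m : ℕ} (b x : Fin m → ℝ) : ℝ := ∑ j, b j * x j

/-- The portfolio simplex `B^m`. -/
def simplex (m : ℕ) : Set (Fin m → ℝ) := stdSimplex ℝ (Fin m)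

/-- The uniform probability measure on the simplex `B^m`, i.e. normalized
`(m-1)`-dimensional Hausdorff measure restricted to the simplex. -/
def uniformSimplex (m : ℕ) : Measure (Fin m → ℝ) :=
  (μH[(m : ℝ) - 1] (simplex m))⁻¹ • (μH[(m : ℝ) - 1]).restrict (simplex m)

/-- Cumulative wealth after `n` periods of the `k`-cyclic constant strategy determined by the
tuple of portfolios `B 0, ..., B (k-1)` (so the portfolio `b^i` of the paper is `B (i-1)`):
at each time `n = k*t + i` with `1 ≤ i ≤ k` it invests the portfolio `B (i-1) = B ((n-1) % k)`. -/
def cyclicWealth {m : ℕ} (k : ℕ) (B : ℕ → Fin m → ℝ) (x : ℕ → Fin m → ℝ) (n : ℕ) : ℝ :=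
  ∏ i ∈ Finset.Icc 1 n, dot (B ((i - 1) % k)) (x i)

/-- The `k`-parallel Universal Portfolio strategy with measure `μ` on the simplex:
for times `n = k*t + i` with `1 ≤ i ≤ k` and `t = 0` it selects the uniform portfolio
`(1/m, ..., 1/m)`, and for `t ≥ 1` it applies the Universal Portfolio rule to the
subsequence `x_i, x_{k+i}, ..., x_{k(t-1)+i}`. -/
def kPUP {m : ℕ} (k : ℕ) (μ : Measure (Fin m → ℝ)) (x : ℕ → Fin m → ℝ) (n : ℕ) : Fin m → ℝ :=
  if (n - 1) / k = 0 then fun _ => (m : ℝ)⁻¹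
  else fun j =>
    (∫ b in simplex m,
        b j * ∏ s ∈ Finset.range ((n - 1) / k), dot b (x (k * s + (n - 1) % k + 1)) ∂μ) /
    (∫ b in simplex m,
        ∏ s ∈ Finset.range ((n - 1) / k), dot b (x (k * s + (n - 1) % k + 1)) ∂μ)

section Chunk1
variable {m : ℕ}

lemma mem_simplex_iff {b : Fin m → ℝ} : b ∈ simplex m ↔ (∀ j, 0 ≤ b j) ∧ ∑ j, b j = 1 :=
  Iff.rfl

lemma dot_nonneg {b x : Fin m → ℝ} (hb : b ∈ simplex m) (hx : ∀ j, 0 ≤ x j) : 0 ≤ dot b x :=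
  Finset.sum_nonneg fun j _ => mul_nonneg (hb.1 j) (hx j)

lemma dot_pos {b x : Fin m → ℝ} (hb : b ∈ simplex m) (hx : ∀ j, 0 < x j) : 0 < dot b x := by
  obtain ⟨j, -, hj⟩ : ∃ j ∈ Finset.univ, 0 < b j := by
    by_contra hcon
    push_neg at hcon
    have h0 : ∑ j, b j = 0 :=
      le_antisymm (Finset.sum_nonpos fun j hj => hcon j hj)
        (Finset.sum_nonneg fun j _ => hb.1 j)
    rw [hb.2] at h0; norm_num at h0
  calc (0:ℝ) < b j * x j := mul_pos hj (hx j)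
    _ ≤ dot b x :=
      Finset.single_le_sum (fun i _ => mul_nonneg (hb.1 i) (hx i).le) (Finset.mem_univ j)

lemma dot_le_sum {b x : Fin m → ℝ} (hb : b ∈ simplex m) (hx : ∀ j, 0 ≤ x j) :
    dot b x ≤ ∑ j, x j := by
  refine Finset.sum_le_sum fun j _ => ?_
  have hb1 : b j ≤ 1 := by
    rw [← hb.2]
    exact Finset.single_le_sum (fun i _ => hb.1 i) (Finset.mem_univ j)
  nlinarith [hb.1 j, hx j]

lemma uniform_mem_simplex (hm : 1 ≤ m) : (fun _ => (m:ℝ)⁻¹) ∈ simplex m := by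
  constructor
  · intro j; positivity
  · simp [Finset.card_univ]
    rw [mul_inv_cancel₀]
    positivity

lemma dot_uniform (x : Fin m → ℝ) : dot (fun _ => (m:ℝ)⁻¹) x = (m:ℝ)⁻¹ * ∑ j, x j := by
  simp [dot, Finset.mul_sum]

lemma dot_combo (a c : ℝ) (b b' x : Fin m → ℝ) :
    dot (a • b + c • b') x = a * dot b x + c * dot b' x := by
  simp [dot, Finset.mul_sum, ← Finset.sum_add_distrib]
  exact Finset.sum_congr rfl fun j _ => by ring

lemma continuous_dot (x : Fin m → ℝ) : Continuous fun b : Fin m → ℝ => dot b x :=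
  continuous_finset_sum _ fun j _ => (continuous_apply j).mul continuous_const

end Chunk1
section Chunk2
open Set
open scoped NNReal

variable {n : ℕ}

/-- The chart domain: sub-simplex of `ℝ^n`. -/
def subD (n : ℕ) : Set (Fin n → ℝ) := {y | (∀ i, 0 ≤ y i) ∧ ∑ i, y i ≤ 1}

def snocMap (y : Fin n → ℝ) : Fin (n+1) → ℝ := Fin.snoc y (1 - ∑ i, y i)

lemma lipschitz_init : LipschitzWith 1 (fun b : Fin (n+1) → ℝ => Fin.init b) := by
  apply LipschitzWith.of_dist_le_mul
  intro b b'
  rw [NNReal.coe_one, one_mul, dist_pi_le_iff dist_nonneg]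
  intro i
  exact dist_le_pi_dist b b' _

lemma lipschitz_snocMap : LipschitzWith (n+1 : ℝ≥0) (snocMap (n := n)) := by
  apply LipschitzWith.of_dist_le_mul
  intro y y'
  have h0 : (0:ℝ) ≤ (n+1 : ℝ≥0) * dist y y' := by positivity
  rw [dist_pi_le_iff h0]
  intro j
  have hle : ∀ i : Fin n, dist (y i) (y' i) ≤ dist y y' := fun i => dist_le_pi_dist y y' i
  have hcast : ((n+1 : ℝ≥0) : ℝ) = (n : ℝ) + 1 := by push_cast; ring
  refine Fin.lastCases ?_ ?_ j
  · simp only [snocMap, Fin.snoc_last]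
    rw [Real.dist_eq]
    have h1 : |(1 - ∑ i, y i) - (1 - ∑ i, y' i)| = |∑ i, (y i - y' i)| := by
      rw [Finset.sum_sub_distrib, abs_sub_comm]; ring_nf
    rw [h1]
    calc |∑ i, (y i - y' i)| ≤ ∑ i, |y i - y' i| := Finset.abs_sum_le_sum_abs _ _
      _ ≤ ∑ _i : Fin n, dist y y' := by
          refine Finset.sum_le_sum fun i _ => ?_
          rw [← Real.dist_eq]; exact hle i
      _ = n * dist y y' := by simp [Finset.card_univ, mul_comm]
      _ ≤ ((n+1 : ℝ≥0) : ℝ) * dist y y' := by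
          rw [hcast]; nlinarith [dist_nonneg (x := y) (y := y')]
  · intro i
    simp only [snocMap, Fin.snoc_castSucc]
    calc dist (y i) (y' i) ≤ dist y y' := hle i
      _ ≤ ((n+1 : ℝ≥0) : ℝ) * dist y y' := by
          rw [hcast]; nlinarith [dist_nonneg (x := y) (y := y')]

lemma snocMap_mem_simplex {y : Fin n → ℝ} (hy : y ∈ subD n) : snocMap y ∈ simplex (n+1) := by
  constructor
  · intro j
    refine Fin.lastCases ?_ ?_ j
    · simp only [snocMap, Fin.snoc_last]; linarith [hy.2]
    · intro i; simp only [snocMap, Fin.snoc_castSucc]; exact hy.1 i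
  · rw [Fin.sum_univ_castSucc]
    simp [snocMap]

lemma init_mem_subD {b : Fin (n+1) → ℝ} (hb : b ∈ simplex (n+1)) : Fin.init b ∈ subD n := by
  constructor
  · intro i; exact hb.1 _
  · have := hb.2
    rw [Fin.sum_univ_castSucc] at this
    have h0 := hb.1 (Fin.last n)
    simp only [Fin.init]
    linarith

lemma snocMap_init {b : Fin (n+1) → ℝ} (hb : b ∈ simplex (n+1)) : snocMap (Fin.init b) = b := by
  have hsum : ∑ i, Fin.init b i = 1 - b (Fin.last n) := by
    have := hb.2
    rw [Fin.sum_univ_castSucc] at this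
    simp only [Fin.init]
    linarith
  rw [snocMap, hsum]
  simpa using Fin.snoc_init_self b

lemma init_snocMap {y : Fin n → ℝ} : Fin.init (snocMap y) = y := by
  funext i
  simp [snocMap, Fin.init]

lemma simplex_eq_image : simplex (n+1) = snocMap '' subD n := by
  ext b
  constructor
  · intro hb
    exact ⟨Fin.init b, init_mem_subD hb, snocMap_init hb⟩
  · rintro ⟨y, hy, rfl⟩
    exact snocMap_mem_simplex hy

lemma subD_eq_image : subD n = (fun b : Fin (n+1) → ℝ => Fin.init b) '' simplex (n+1) := by
  ext y
  constructor
  · intro hy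
    exact ⟨snocMap y, snocMap_mem_simplex hy, init_snocMap⟩
  · rintro ⟨b, hb, rfl⟩
    exact init_mem_subD hb

lemma hausdorff_pi_n : (μH[(n : ℝ)] : Measure (Fin n → ℝ)) = volume := by
  rw [show ((n:ℝ)) = ((Fintype.card (Fin n) : ℕ) : ℝ) by simp]
  exact hausdorffMeasure_pi_real

lemma volume_subD_pos : 0 < volume (subD n) := by
  have hsub : (univ.pi fun _ : Fin n => Icc (0:ℝ) (1/(n+1))) ⊆ subD n := by
    intro y hy
    simp only [Set.mem_pi, mem_univ, forall_true_left, mem_Icc] at hy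
    constructor
    · intro i; exact (hy i).1
    · calc ∑ i, y i ≤ ∑ _i : Fin n, 1/((n:ℝ)+1) := Finset.sum_le_sum fun i _ => (hy i).2
        _ = n * (1/((n:ℝ)+1)) := by simp [Finset.card_univ, mul_comm]
        _ ≤ 1 := by
            rw [mul_one_div, div_le_one (by positivity)]
            linarith
  refine lt_of_lt_of_le ?_ (measure_mono hsub)
  rw [volume_pi_pi]
  refine CanonicallyOrderedAdd.prod_pos.2 fun i _ => ?_
  rw [Real.volume_Icc]
  apply ENNReal.ofReal_pos.2
  have : (0:ℝ) < (n:ℝ)+1 := by positivity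
  rw [sub_zero]
  positivity

lemma volume_subD_lt_top : volume (subD n) < ⊤ := by
  have hsub : subD n ⊆ univ.pi fun _ : Fin n => Icc (0:ℝ) 1 := by
    intro y hy
    simp only [Set.mem_pi, mem_univ, forall_true_left, mem_Icc]
    intro i
    refine ⟨hy.1 i, ?_⟩
    calc y i ≤ ∑ j, y j := Finset.single_le_sum (fun j _ => hy.1 j) (Finset.mem_univ i)
      _ ≤ 1 := hy.2
  refine lt_of_le_of_lt (measure_mono hsub) ?_
  rw [volume_pi_pi]
  simp [Real.volume_Icc]

lemma hausdorff_simplex_ne_top (m : ℕ) (hm : 2 ≤ m) : μH[(m:ℝ)-1] (simplex m) ≠ ⊤ := by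
  obtain ⟨n, rfl⟩ : ∃ n, m = n + 1 := ⟨m - 1, by omega⟩
  have hd : ((n:ℝ)+1) - 1 = (n:ℝ) := by ring
  have hd0 : (0:ℝ) ≤ (n:ℝ) := by positivity
  rw [show ((n+1 : ℕ):ℝ) = (n:ℝ)+1 by push_cast; ring, hd]
  rw [simplex_eq_image]
  refine ne_top_of_le_ne_top ?_ (lipschitz_snocMap.hausdorffMeasure_image_le hd0 (subD n))
  apply ENNReal.mul_ne_top
  · exact ENNReal.rpow_ne_top_of_nonneg hd0 ENNReal.coe_ne_top
  · rw [hausdorff_pi_n]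
    exact volume_subD_lt_top.ne

lemma hausdorff_simplex_ne_zero (m : ℕ) (hm : 2 ≤ m) : μH[(m:ℝ)-1] (simplex m) ≠ 0 := by
  obtain ⟨n, rfl⟩ : ∃ n, m = n + 1 := ⟨m - 1, by omega⟩
  have hd : ((n:ℝ)+1) - 1 = (n:ℝ) := by ring
  have hd0 : (0:ℝ) ≤ (n:ℝ) := by positivity
  rw [show ((n+1 : ℕ):ℝ) = (n:ℝ)+1 by push_cast; ring, hd]
  have hle : volume (subD n) ≤ μH[(n:ℝ)] (simplex (n+1)) := by
    rw [← hausdorff_pi_n, subD_eq_image]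
    have := lipschitz_init.hausdorffMeasure_image_le hd0 (simplex (n+1))
    simpa using this
  intro h0
  rw [h0] at hle
  exact absurd (le_antisymm hle zero_le) volume_subD_pos.ne'

end Chunk2
section Chunk3
open Set
variable {m : ℕ}

lemma measurableSet_simplex : MeasurableSet (simplex m) :=
  (isCompact_stdSimplex ℝ (Fin m)).isClosed.measurableSet

lemma simplex_nonempty (hm : 2 ≤ m) : (simplex m).Nonempty :=
  ⟨fun _ => (m:ℝ)⁻¹, uniform_mem_simplex (by omega)⟩

lemma restrict_uniformSimplex : (uniformSimplex m).restrict (simplex m) = uniformSimplex m := by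
  unfold uniformSimplex
  rw [Measure.restrict_smul, Measure.restrict_restrict measurableSet_simplex, Set.inter_self]

lemma isProb_uniformSimplex (hm : 2 ≤ m) : IsProbabilityMeasure (uniformSimplex m) := by
  constructor
  unfold uniformSimplex
  rw [Measure.smul_apply, Measure.restrict_apply MeasurableSet.univ, Set.univ_inter,
    smul_eq_mul]
  exact ENNReal.inv_mul_cancel (hausdorff_simplex_ne_zero m hm) (hausdorff_simplex_ne_top m hm)

lemma ae_mem_simplex : ∀ᵐ b ∂(uniformSimplex m), b ∈ simplex m := by
  rw [ae_iff]
  have : {b : Fin m → ℝ | ¬ b ∈ simplex m} = (simplex m)ᶜ := rfl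
  rw [this, ← restrict_uniformSimplex,
    Measure.restrict_apply measurableSet_simplex.compl, Set.compl_inter_self]
  exact measure_empty

lemma integrable_of_continuous (hm : 2 ≤ m) {f : (Fin m → ℝ) → ℝ} (hf : Continuous f) :
    Integrable f (uniformSimplex m) := by
  haveI := isProb_uniformSimplex hm
  have h1 : IntegrableOn f (simplex m) (uniformSimplex m) :=
    hf.continuousOn.integrableOn_compact (isCompact_stdSimplex ℝ (Fin m))
  rwa [IntegrableOn, restrict_uniformSimplex] at h1

lemma setIntegral_simplex (f : (Fin m → ℝ) → ℝ) :
    ∫ b in simplex m, f b ∂(uniformSimplex m) = ∫ b, f b ∂(uniformSimplex m) := by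
  exact congrArg (fun μ => ∫ b, f b ∂μ) restrict_uniformSimplex

lemma integral_le_const (hm : 2 ≤ m) {f : (Fin m → ℝ) → ℝ} (hf : Continuous f) {c : ℝ}
    (hle : ∀ b ∈ simplex m, f b ≤ c) : ∫ b, f b ∂(uniformSimplex m) ≤ c := by
  haveI := isProb_uniformSimplex hm
  have h1 : ∫ b, f b ∂(uniformSimplex m) ≤ ∫ _b, c ∂(uniformSimplex m) := by
    refine integral_mono_ae (integrable_of_continuous hm hf) (integrable_const c) ?_
    filter_upwards [ae_mem_simplex] with b hb using hle b hb
  simpa using h1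

lemma const_le_integral (hm : 2 ≤ m) {f : (Fin m → ℝ) → ℝ} (hf : Continuous f) {c : ℝ}
    (hle : ∀ b ∈ simplex m, c ≤ f b) : c ≤ ∫ b, f b ∂(uniformSimplex m) := by
  haveI := isProb_uniformSimplex hm
  have h1 : ∫ _b, c ∂(uniformSimplex m) ≤ ∫ b, f b ∂(uniformSimplex m) := by
    refine integral_mono_ae (integrable_const c) (integrable_of_continuous hm hf) ?_
    filter_upwards [ae_mem_simplex] with b hb using hle b hb
  simpa using h1

lemma integral_pos_of_continuous (hm : 2 ≤ m) {f : (Fin m → ℝ) → ℝ} (hf : Continuous f)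
    (hpos : ∀ b ∈ simplex m, 0 < f b) : 0 < ∫ b, f b ∂(uniformSimplex m) := by
  obtain ⟨b₀, hb₀mem, hb₀⟩ := (isCompact_stdSimplex ℝ (Fin m)).exists_isMinOn
    (simplex_nonempty hm) hf.continuousOn
  have hc : 0 < f b₀ := hpos _ hb₀mem
  refine lt_of_lt_of_le hc (const_le_integral hm hf ?_)
  intro b hb
  exact hb₀ hb

lemma integral_mono_simplex (hm : 2 ≤ m) {f g : (Fin m → ℝ) → ℝ} (hf : Continuous f)
    (hg : Continuous g) (hle : ∀ b ∈ simplex m, f b ≤ g b) :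
    ∫ b, f b ∂(uniformSimplex m) ≤ ∫ b, g b ∂(uniformSimplex m) := by
  refine integral_mono_ae (integrable_of_continuous hm hf) (integrable_of_continuous hm hg) ?_
  filter_upwards [ae_mem_simplex] with b hb using hle b hb

end Chunk3
section Chunk4
open Finset
variable {m k : ℕ}

/-- The Universal-Portfolio integral for residue `r` after `t` rounds. -/
def FF (m k : ℕ) (x : ℕ → Fin m → ℝ) (r t : ℕ) : ℝ :=
  ∫ b, ∏ s ∈ Finset.range t, dot b (x (k*s + r + 1)) ∂(uniformSimplex m)

lemma continuous_prodDot (x : ℕ → Fin m → ℝ) (r t : ℕ) :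
    Continuous fun b : Fin m → ℝ => ∏ s ∈ Finset.range t, dot b (x (k*s + r + 1)) :=
  continuous_finset_prod _ fun s _ => continuous_dot _

lemma FF_zero (hm : 2 ≤ m) (x : ℕ → Fin m → ℝ) (r : ℕ) : FF m k x r 0 = 1 := by
  haveI := isProb_uniformSimplex hm
  simp [FF]

lemma FF_pos (hm : 2 ≤ m) {x : ℕ → Fin m → ℝ} (hx : ∀ i, 1 ≤ i → ∀ j, 0 < x i j)
    (r t : ℕ) : 0 < FF m k x r t := by
  refine integral_pos_of_continuous hm (continuous_prodDot x r t) fun b hb => ?_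
  exact Finset.prod_pos fun s _ => dot_pos hb fun j => hx _ (by omega) j

lemma prod_nonneg_on {x : ℕ → Fin m → ℝ} (hx : ∀ i, 1 ≤ i → ∀ j, 0 < x i j)
    {b : Fin m → ℝ} (hb : b ∈ simplex m) (r t : ℕ) :
    0 ≤ ∏ s ∈ Finset.range t, dot b (x (k*s + r + 1)) :=
  Finset.prod_nonneg fun s _ => dot_nonneg hb fun j => (hx _ (by omega) j).le

lemma FF_succ_le (hm : 2 ≤ m) {x : ℕ → Fin m → ℝ} (hx : ∀ i, 1 ≤ i → ∀ j, 0 < x i j)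
    (r t : ℕ) : FF m k x r (t+1) ≤ (∑ j, x (k*t + r + 1) j) * FF m k x r t := by
  have h1 : FF m k x r (t+1)
      = ∫ b, (∏ s ∈ Finset.range t, dot b (x (k*s + r + 1))) * dot b (x (k*t + r + 1))
          ∂(uniformSimplex m) := by
    simp only [FF, Finset.prod_range_succ]
  rw [h1]
  have h2 : ∫ b, (∏ s ∈ Finset.range t, dot b (x (k*s + r + 1))) * dot b (x (k*t + r + 1))
        ∂(uniformSimplex m)
      ≤ ∫ b, (∏ s ∈ Finset.range t, dot b (x (k*s + r + 1))) * (∑ j, x (k*t + r + 1) j)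
          ∂(uniformSimplex m) := by
    refine integral_mono_simplex hm ((continuous_prodDot x r t).mul (continuous_dot _))
      ((continuous_prodDot x r t).mul continuous_const) fun b hb => ?_
    exact mul_le_mul_of_nonneg_left
      (dot_le_sum hb fun j => (hx _ (by omega) j).le) (prod_nonneg_on hx hb r t)
  refine le_trans h2 ?_
  rw [integral_mul_const]
  rw [mul_comm]
  simp [FF]

lemma time_decomp (hk1 : 1 ≤ k) (n : ℕ) (hn : 1 ≤ n) :
    n = k * ((n-1)/k) + ((n-1) % k) + 1 ∧ (n-1) % k < k := by
  have h1 := Nat.div_add_mod (n-1) k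
  have h2 := Nat.mod_lt (n-1) (show 0 < k by omega)
  omega

lemma div_mod_of_form (hk1 : 1 ≤ k) (t r : ℕ) (hr : r < k) :
    (k*t + r + 1 - 1) / k = t ∧ (k*t + r + 1 - 1) % k = r := by
  have h1 : k*t + r + 1 - 1 = k*t + r := by omega
  rw [h1]
  constructor
  · rw [Nat.mul_add_div (by omega), Nat.div_eq_of_lt hr, add_zero]
  · rw [Nat.mul_add_mod, Nat.mod_eq_of_lt hr]

lemma kPUP_factor_zero (hm : 2 ≤ m) (hk1 : 1 ≤ k) (x : ℕ → Fin m → ℝ) (r : ℕ) (hr : r < k) :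
    dot (kPUP k (uniformSimplex m) x (k*0 + r + 1)) (x (k*0 + r + 1))
      = (m:ℝ)⁻¹ * ∑ j, x (r+1) j := by
  obtain ⟨hdiv, hmod⟩ := div_mod_of_form hk1 0 r hr
  rw [kPUP, if_pos (by rw [hdiv])]
  rw [show k*0 + r + 1 = r + 1 by ring]
  exact dot_uniform _

lemma kPUP_factor_succ (hm : 2 ≤ m) (hk1 : 1 ≤ k) {x : ℕ → Fin m → ℝ}
    (hx : ∀ i, 1 ≤ i → ∀ j, 0 < x i j) (r : ℕ) (hr : r < k) (t : ℕ) (ht : 1 ≤ t) :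
    dot (kPUP k (uniformSimplex m) x (k*t + r + 1)) (x (k*t + r + 1))
      = FF m k x r (t+1) / FF m k x r t := by
  obtain ⟨hdiv, hmod⟩ := div_mod_of_form hk1 t r hr
  rw [kPUP, if_neg (by rw [hdiv]; omega)]
  simp only [hdiv, hmod]
  set n := k*t + r + 1 with hn
  have hden : (∫ b in simplex m, ∏ s ∈ Finset.range t, dot b (x (k*s + r + 1))
      ∂(uniformSimplex m)) = FF m k x r t := setIntegral_simplex _
  have hnum : ∀ j, (∫ b in simplex m,
      b j * ∏ s ∈ Finset.range t, dot b (x (k*s + r + 1)) ∂(uniformSimplex m))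
      = ∫ b, b j * ∏ s ∈ Finset.range t, dot b (x (k*s + r + 1)) ∂(uniformSimplex m) :=
    fun j => setIntegral_simplex _
  rw [dot]
  simp only [hden, hnum]
  have key : ∑ j, (x n j) * ∫ b, b j * ∏ s ∈ Finset.range t, dot b (x (k*s + r + 1))
      ∂(uniformSimplex m) = FF m k x r (t+1) := by
    have h1 : ∀ j : Fin m, (x n j) * ∫ b, b j * ∏ s ∈ Finset.range t, dot b (x (k*s + r + 1))
        ∂(uniformSimplex m)
        = ∫ b, x n j * (b j * ∏ s ∈ Finset.range t, dot b (x (k*s + r + 1)))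
            ∂(uniformSimplex m) := fun j => (integral_const_mul _ _).symm
    simp only [h1]
    rw [← integral_finset_sum]
    · have h2 : ∀ b : Fin m → ℝ,
          ∑ j, x n j * (b j * ∏ s ∈ Finset.range t, dot b (x (k*s + r + 1)))
          = ∏ s ∈ Finset.range (t+1), dot b (x (k*s + r + 1)) := by
        intro b
        rw [Finset.prod_range_succ, ← hn]
        rw [show (∑ j, x n j * (b j * ∏ s ∈ Finset.range t, dot b (x (k*s + r + 1))))
          = (∑ j, b j * x n j) * ∏ s ∈ Finset.range t, dot b (x (k*s + r + 1)) by
            rw [Finset.sum_mul]; exact Finset.sum_congr rfl fun j _ => by ring]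
        rw [mul_comm]
        rfl
      simp only [h2]
      rfl
    · intro j _
      exact integrable_of_continuous hm
        (continuous_const.mul ((continuous_apply j).mul (continuous_prodDot x r t)))
  calc ∑ j, (fun j => (∫ b, b j * ∏ s ∈ Finset.range t, dot b (x (k*s + r + 1))
          ∂(uniformSimplex m)) / FF m k x r t) j * x n j
      = (∑ j, (x n j) * ∫ b, b j * ∏ s ∈ Finset.range t, dot b (x (k*s + r + 1))
          ∂(uniformSimplex m)) / FF m k x r t := by
        rw [Finset.sum_div]
        exact Finset.sum_congr rfl fun j _ => by ring
    _ = FF m k x r (t+1) / FF m k x r t := by rw [key]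

end Chunk4
section Chunk5
open Finset
variable {m k : ℕ}

def Phi (m k : ℕ) (x : ℕ → Fin m → ℝ) (r T : ℕ) : ℝ :=
  ∏ t ∈ Finset.range T, dot (kPUP k (uniformSimplex m) x (k*t + r + 1)) (x (k*t + r + 1))

lemma sum_x_pos (hm : 2 ≤ m) {x : ℕ → Fin m → ℝ} (hx : ∀ i, 1 ≤ i → ∀ j, 0 < x i j)
    (i : ℕ) (hi : 1 ≤ i) : 0 < ∑ j, x i j := by
  haveI : NeZero m := ⟨by omega⟩
  exact Finset.sum_pos (fun j _ => hx i hi j) Finset.univ_nonempty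

lemma Phi_eq (hm : 2 ≤ m) (hk1 : 1 ≤ k) {x : ℕ → Fin m → ℝ}
    (hx : ∀ i, 1 ≤ i → ∀ j, 0 < x i j) {r : ℕ} (hr : r < k) {T : ℕ} (hT : 1 ≤ T) :
    Phi m k x r T = ((m:ℝ)⁻¹ * ∑ j, x (r+1) j) * (FF m k x r T / FF m k x r 1) := by
  induction T with
  | zero => omega
  | succ T ih =>
    rcases Nat.lt_or_ge T 1 with hT1 | hT1
    · have hT0 : T = 0 := by omega
      subst hT0
      rw [Phi, Finset.prod_range_one, kPUP_factor_zero hm hk1 x r hr,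
        div_self (FF_pos hm hx r 1).ne', mul_one]
    · have hstep := kPUP_factor_succ hm hk1 hx r hr T hT1
      rw [Phi, Finset.prod_range_succ, ← Phi, ih hT1, hstep]
      have h1 := (FF_pos (k := k) hm hx r 1).ne'
      have hT' := (FF_pos (k := k) hm hx r T).ne'
      field_simp

lemma FF_one_le (hm : 2 ≤ m) (hk1 : 1 ≤ k) {x : ℕ → Fin m → ℝ}
    (hx : ∀ i, 1 ≤ i → ∀ j, 0 < x i j) (r : ℕ) :
    FF m k x r 1 ≤ ∑ j, x (r+1) j := by
  have h1 : FF m k x r 1 = ∫ b, dot b (x (k*0 + r + 1)) ∂(uniformSimplex m) := by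
    simp only [FF, Finset.prod_range_one]
  rw [h1, show k*0 + r + 1 = r + 1 by ring]
  exact integral_le_const hm (continuous_dot _) fun b hb =>
    dot_le_sum hb fun j => (hx _ (by omega) j).le

lemma FF_div_m_le_Phi (hm : 2 ≤ m) (hk1 : 1 ≤ k) {x : ℕ → Fin m → ℝ}
    (hx : ∀ i, 1 ≤ i → ∀ j, 0 < x i j) {r : ℕ} (hr : r < k) {T : ℕ} (hT : 1 ≤ T) :
    FF m k x r T / m ≤ Phi m k x r T := by
  rw [Phi_eq hm hk1 hx hr hT]
  set S := ∑ j, x (r+1) j with hS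
  set FT := FF m k x r T with hFT
  set F1 := FF m k x r 1 with hF1
  have hSpos : 0 < S := sum_x_pos hm hx (r+1) (by omega)
  have hFTpos : 0 < FT := FF_pos hm hx r T
  have hF1pos : 0 < F1 := FF_pos hm hx r 1
  have hF1le : F1 ≤ S := FF_one_le hm hk1 hx r
  have hmpos : (0:ℝ) < m := by positivity
  rw [show ((m:ℝ)⁻¹ * S) * (FT / F1) = ((m:ℝ)⁻¹ * S * FT) / F1 by ring]
  rw [div_le_div_iff₀ hmpos hF1pos]
  have hinv : (m:ℝ)⁻¹ * (m:ℝ) = 1 := inv_mul_cancel₀ hmpos.ne'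
  calc FT * F1 ≤ FT * S := by nlinarith
    _ = (m:ℝ)⁻¹ * S * FT * m := by
        rw [show (m:ℝ)⁻¹ * S * FT * (m:ℝ) = ((m:ℝ)⁻¹ * (m:ℝ)) * (FT * S) by ring, hinv, one_mul]

lemma Phi_pos (hm : 2 ≤ m) (hk1 : 1 ≤ k) {x : ℕ → Fin m → ℝ}
    (hx : ∀ i, 1 ≤ i → ∀ j, 0 < x i j) {r : ℕ} (hr : r < k) (T : ℕ) :
    0 < Phi m k x r T := by
  refine Finset.prod_pos fun t _ => ?_
  rcases Nat.eq_zero_or_pos t with ht | ht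
  · subst ht
    rw [kPUP_factor_zero hm hk1 x r hr]
    have := sum_x_pos hm hx (r+1) (by omega)
    positivity
  · rw [kPUP_factor_succ hm hk1 hx r hr t ht]
    exact div_pos (FF_pos hm hx r _) (FF_pos hm hx r _)

lemma kPUP_factor_pos (hm : 2 ≤ m) (hk1 : 1 ≤ k) {x : ℕ → Fin m → ℝ}
    (hx : ∀ i, 1 ≤ i → ∀ j, 0 < x i j) (n : ℕ) (hn : 1 ≤ n) :
    0 < dot (kPUP k (uniformSimplex m) x n) (x n) := by
  obtain ⟨hform, hr⟩ := time_decomp hk1 n hn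
  rw [hform]
  rcases Nat.eq_zero_or_pos ((n-1)/k) with ht | ht
  · rw [ht, kPUP_factor_zero hm hk1 x _ hr]
    have := sum_x_pos hm hx ((n-1)%k+1) (by omega)
    positivity
  · rw [kPUP_factor_succ hm hk1 hx _ hr _ ht]
    exact div_pos (FF_pos hm hx _ _) (FF_pos hm hx _ _)

lemma kPUP_factor_le_sum (hm : 2 ≤ m) (hk1 : 1 ≤ k) {x : ℕ → Fin m → ℝ}
    (hx : ∀ i, 1 ≤ i → ∀ j, 0 < x i j) (n : ℕ) (hn : 1 ≤ n) :
    dot (kPUP k (uniformSimplex m) x n) (x n) ≤ ∑ j, x n j := by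
  obtain ⟨hform, hr⟩ := time_decomp hk1 n hn
  rw [hform]
  rcases Nat.eq_zero_or_pos ((n-1)/k) with ht | ht
  · rw [ht, kPUP_factor_zero hm hk1 x _ hr]
    have hS : 0 < ∑ j, x ((n-1)%k+1) j := sum_x_pos hm hx ((n-1)%k+1) (by omega)
    have hminv : (m:ℝ)⁻¹ ≤ 1 := by
      rw [inv_le_one_iff₀]
      right; exact_mod_cast by omega
    rw [show k*0 + (n-1)%k + 1 = (n-1)%k + 1 by ring]
    nlinarith
  · rw [kPUP_factor_succ hm hk1 hx _ hr _ ht]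
    rw [div_le_iff₀ (FF_pos hm hx _ _)]
    have := FF_succ_le (k := k) hm hx ((n-1)%k) ((n-1)/k)
    nlinarith [FF_pos (k := k) hm hx ((n-1)%k) ((n-1)/k)]

end Chunk5
section Chunk6
open Finset Set
open scoped ENNReal NNReal
variable {m k : ℕ}

lemma measure_shrunk (hm : 2 ≤ m) {bs : Fin m → ℝ} (hb : bs ∈ simplex m) {α : ℝ}
    (hα0 : 0 < α) (hα1 : α < 1) :
    α ^ (m - 1) ≤ (uniformSimplex m ((fun u => (1-α) • bs + α • u) '' simplex m)).toReal := by
  haveI := isProb_uniformSimplex hm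
  set f : (Fin m → ℝ) → (Fin m → ℝ) := fun u => (1-α) • bs + α • u with hf
  set A : Set (Fin m → ℝ) := f '' simplex m with hA
  set d : ℝ := (m:ℝ) - 1 with hd
  have hd0 : 0 ≤ d := by
    rw [hd]
    have : (2:ℝ) ≤ (m:ℝ) := by exact_mod_cast hm
    linarith
  have hAsub : A ⊆ simplex m := by
    rintro - ⟨u, hu, rfl⟩
    exact (convex_stdSimplex ℝ (Fin m)) hb hu (by linarith) hα0.le (by ring)
  -- the inverse contraction
  set g : (Fin m → ℝ) → (Fin m → ℝ) := fun v => α⁻¹ • (v - (1-α) • bs) with hg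
  have hginv : ∀ u, g (f u) = u := by
    intro u
    simp only [hg, hf, add_sub_cancel_left, smul_smul]
    rw [inv_mul_cancel₀ hα0.ne', one_smul]
  have hgA : g '' A = simplex m := by
    rw [hA, Set.image_image]
    simp only [hginv]
    exact Set.image_id _
  have hglip : LipschitzWith (Real.toNNReal α⁻¹) g := by
    apply LipschitzWith.of_dist_le_mul
    intro v w
    rw [dist_eq_norm, dist_eq_norm]
    have h1 : g v - g w = α⁻¹ • (v - w) := by
      rw [hg]
      simp only [← smul_sub]
      congr 1
      abel
    rw [h1, norm_smul, Real.norm_eq_abs, abs_of_pos (by positivity)]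
    rw [Real.coe_toNNReal _ (by positivity)]
  set H := (μH[(m : ℝ) - 1] : Measure (Fin m → ℝ)) with hH
  have hHlip := hglip.hausdorffMeasure_image_le hd0 A
  rw [hgA] at hHlip
  set c : ℝ≥0∞ := ENNReal.ofReal α with hc
  have hc0 : c ≠ 0 := (ENNReal.ofReal_pos.2 hα0).ne'
  have hct : c ≠ ⊤ := ENNReal.ofReal_ne_top
  have hKc : (Real.toNNReal α⁻¹ : ℝ≥0∞) = c⁻¹ := by
    rw [hc, ← ENNReal.ofReal_inv_of_pos hα0]
    rfl
  rw [hKc, ENNReal.inv_rpow] at hHlip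
  have hcd0 : c ^ d ≠ 0 := (ENNReal.rpow_pos (pos_iff_ne_zero.2 hc0) hct).ne'
  have hcdt : c ^ d ≠ ⊤ := ENNReal.rpow_ne_top_of_nonneg hd0 hct
  -- μH (simplex) ≤ (c^d)⁻¹ * μH A  ⟹  c^d * μH simplex ≤ μH A
  have h2 : c ^ d * μH[d] (simplex m) ≤ μH[d] A := by
    calc c ^ d * μH[d] (simplex m) ≤ c ^ d * ((c ^ d)⁻¹ * μH[d] A) := by
          exact mul_le_mul_right hHlip _
      _ = (c ^ d * (c ^ d)⁻¹) * μH[d] A := by rw [mul_assoc]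
      _ = μH[d] A := by rw [ENNReal.mul_inv_cancel hcd0 hcdt, one_mul]
  have hAmeas : MeasurableSet A := by
    have : IsCompact A := (isCompact_stdSimplex ℝ (Fin m)).image
      (continuous_const.add (continuous_id.const_smul α))
    exact this.isClosed.measurableSet
  have hνA : c ^ d ≤ uniformSimplex m A := by
    have hs0 := hausdorff_simplex_ne_zero m hm
    have hst := hausdorff_simplex_ne_top m hm
    have : uniformSimplex m A = (μH[d] (simplex m))⁻¹ * μH[d] A := by
      rw [uniformSimplex, Measure.smul_apply, Measure.restrict_apply hAmeas,
        Set.inter_eq_left.2 hAsub, smul_eq_mul]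
    rw [this]
    calc c ^ d = (μH[d] (simplex m))⁻¹ * (c ^ d * μH[d] (simplex m)) := by
          rw [mul_comm (c^d), ← mul_assoc, ENNReal.inv_mul_cancel hs0 hst, one_mul]
      _ ≤ (μH[d] (simplex m))⁻¹ * μH[d] A := mul_le_mul_right h2 _
  have hfin : uniformSimplex m A ≠ ⊤ := measure_ne_top _ _
  have := ENNReal.toReal_mono hfin hνA
  refine le_trans (le_of_eq ?_) this
  rw [hc, ← ENNReal.toReal_rpow, ENNReal.toReal_ofReal hα0.le]
  rw [← Real.rpow_natCast α (m-1)]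
  congr 1
  rw [hd]
  have : ((m - 1 : ℕ) : ℝ) = (m:ℝ) - 1 := by
    have : (1:ℕ) ≤ m := by omega
    push_cast [this]
    ring
  rw [this]

lemma wealth_le_FF (hm : 2 ≤ m) (hk1 : 1 ≤ k) {x : ℕ → Fin m → ℝ}
    (hx : ∀ i, 1 ≤ i → ∀ j, 0 < x i j) {r : ℕ} (hr : r < k)
    {bs : Fin m → ℝ} (hb : bs ∈ simplex m) {T : ℕ} (hT : 1 ≤ T) :
    ∏ t ∈ Finset.range T, dot bs (x (k*t + r + 1))
      ≤ 2 * (2*(T:ℝ)) ^ (m-1) * FF m k x r T := by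
  haveI := isProb_uniformSimplex hm
  have hT0 : (0:ℝ) < T := by exact_mod_cast hT
  have hT1 : (1:ℝ) ≤ T := by exact_mod_cast hT
  set α : ℝ := (2*(T:ℝ))⁻¹ with hα
  have hα0 : 0 < α := by rw [hα]; positivity
  have hα1 : α < 1 := by
    rw [hα]
    rw [inv_lt_one_iff₀]
    right; linarith
  set S := ∏ t ∈ Finset.range T, dot bs (x (k*t + r + 1)) with hS
  have hSnn : 0 ≤ S := prod_nonneg_on hx hb r T
  set f : (Fin m → ℝ) → (Fin m → ℝ) := fun u => (1-α) • bs + α • u with hf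
  set A : Set (Fin m → ℝ) := f '' simplex m with hA
  have hAmeas : MeasurableSet A :=
    (((isCompact_stdSimplex ℝ (Fin m)).image
      (continuous_const.add (continuous_id.const_smul α))).isClosed).measurableSet
  -- pointwise lower bound on A
  have hpt : ∀ b ∈ A, (1 - α)^T * S ≤ ∏ t ∈ Finset.range T, dot b (x (k*t + r + 1)) := by
    rintro - ⟨u, hu, rfl⟩
    have h1 : ∀ t ∈ Finset.range T,
        (1-α) * dot bs (x (k*t + r + 1)) ≤ dot (f u) (x (k*t + r + 1)) := by
      intro t _
      rw [hf, dot_combo]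
      have : 0 ≤ α * dot u (x (k*t + r + 1)) :=
        mul_nonneg hα0.le (dot_nonneg hu fun j => (hx _ (by omega) j).le)
      linarith
    calc (1-α)^T * S = ∏ t ∈ Finset.range T, ((1-α) * dot bs (x (k*t + r + 1))) := by
          rw [hS, Finset.prod_mul_distrib, Finset.prod_const, Finset.card_range]
      _ ≤ ∏ t ∈ Finset.range T, dot (f u) (x (k*t + r + 1)) := by
          refine Finset.prod_le_prod (fun t _ => ?_) h1
          exact mul_nonneg (by linarith) (dot_nonneg hb fun j => (hx _ (by omega) j).le)
  -- integral bound
  have hint : IntegrableOn (fun b => ∏ t ∈ Finset.range T, dot b (x (k*t + r + 1))) A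
      (uniformSimplex m) := (integrable_of_continuous hm (continuous_prodDot x r T)).integrableOn
  have h3 := setIntegral_ge_of_const_le hAmeas (measure_ne_top _ _) hpt hint
  have h4 : ∫ b in A, ∏ t ∈ Finset.range T, dot b (x (k*t + r + 1)) ∂(uniformSimplex m)
      ≤ FF m k x r T := by
    rw [FF]
    refine setIntegral_le_integral (integrable_of_continuous hm (continuous_prodDot x r T)) ?_
    filter_upwards [ae_mem_simplex] with b hb' using prod_nonneg_on hx hb' r T
  -- (1-α)^T ≥ 1/2
  have hhalf : (1:ℝ)/2 ≤ (1-α)^T := by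
    have hber := one_add_mul_le_pow (show (-2:ℝ) ≤ -α by linarith) T
    have hTα : (T:ℝ) * α = 1/2 := by
      rw [hα]
      field_simp
    calc (1:ℝ)/2 = 1 + (T:ℝ) * (-α) := by rw [mul_neg, hTα]; ring
      _ ≤ (1 + -α)^T := hber
      _ = (1-α)^T := by ring_nf
  have hmeas := measure_shrunk hm hb hα0 hα1
  -- combine : FF ≥ (1/2 * S) * α^(m-1)
  have h5 : (1/2 * S) * α^(m-1) ≤ FF m k x r T := by
    have hc1 : (1/2 * S) * α^(m-1) ≤ ((1-α)^T * S) * (uniformSimplex m A).toReal := by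
      refine mul_le_mul ?_ hmeas (by positivity) ?_
      · exact mul_le_mul_of_nonneg_right hhalf hSnn
      · exact mul_nonneg (by positivity) hSnn
    exact le_trans hc1 (le_trans (by rw [smul_eq_mul, mul_comm] at h3; exact h3) h4)
  -- rearrange
  have hpow : (0:ℝ) < (2*(T:ℝ))^(m-1) := by positivity
  have hαpow : α^(m-1) = ((2*(T:ℝ))^(m-1))⁻¹ := by
    rw [hα, inv_pow]
  calc S = 2 * (2*(T:ℝ))^(m-1) * ((1/2 * S) * α^(m-1)) := by
        rw [hαpow]
        field_simp
      _ ≤ 2 * (2*(T:ℝ))^(m-1) * FF m k x r T := by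
        refine mul_le_mul_of_nonneg_left h5 (by positivity)

end Chunk6
section Chunk7
open Finset
variable {k : ℕ}

lemma cycDiv (hk1 : 1 ≤ k) (q : ℕ) {s : ℕ} (hs : s < k) : (k*q + s)/k = q := by
  rw [Nat.mul_add_div (by omega), Nat.div_eq_of_lt hs, add_zero]

lemma cycMod (hk1 : 1 ≤ k) (q : ℕ) {s : ℕ} (hs : s < k) : (k*q + s) % k = s := by
  rw [Nat.mul_add_mod, Nat.mod_eq_of_lt hs]

lemma cycle_count_base (hk1 : 1 ≤ k) {r : ℕ} (hr : r < k) : (0 + k - 1 - r) / k = 0 :=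
  Nat.div_eq_of_lt (by omega)

lemma cycle_decomp (hk1 : 1 ≤ k) (N : ℕ) :
    ∃ q r0, r0 < k ∧ N = k*q + r0 ∧ N / k = q ∧ N % k = r0 := by
  refine ⟨N/k, N%k, Nat.mod_lt _ (by omega), (Nat.div_add_mod N k).symm, rfl, rfl⟩

lemma cycle_count_same (hk1 : 1 ≤ k) (N : ℕ) :
    (N + k - 1 - (N % k)) / k = N / k := by
  obtain ⟨q, r0, hr0k, hN, hdiv, hmod⟩ := cycle_decomp hk1 N
  rw [hmod, hdiv]
  rw [show N + k - 1 - r0 = k*q + (k-1) from by rw [hN]; omega]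
  exact cycDiv hk1 q (by omega)

lemma cycle_count_succ_same (hk1 : 1 ≤ k) (N : ℕ) :
    ((N+1) + k - 1 - (N % k)) / k = N / k + 1 := by
  obtain ⟨q, r0, hr0k, hN, hdiv, hmod⟩ := cycle_decomp hk1 N
  have hdist : k*(q+1) = k*q + k := by ring
  rw [hmod, hdiv]
  rw [show (N+1) + k - 1 - r0 = k*(q+1) + 0 from by rw [hN]; omega]
  exact cycDiv hk1 (q+1) (by omega)

lemma cycle_count_succ_other (hk1 : 1 ≤ k) (N : ℕ) {r : ℕ} (hr : r < k) (hne : r ≠ N % k) :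
    ((N+1) + k - 1 - r) / k = (N + k - 1 - r) / k := by
  obtain ⟨q, r0, hr0k, hN, hdiv, hmod⟩ := cycle_decomp hk1 N
  rw [hmod] at hne
  set s := k - 1 - r + r0 with hs
  have h1 : N + k - 1 - r = k*q + s := by rw [hN]; omega
  have h2 : (N+1) + k - 1 - r = k*q + (s+1) := by rw [hN]; omega
  rw [h1, h2]
  have hsne : s ≠ k - 1 := by omega
  rcases Nat.lt_or_ge s (k-1) with hcase | hcase
  · rw [cycDiv hk1 q (by omega), cycDiv hk1 q (by omega)]
  · have hsk : k ≤ s := by omega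
    have hdist : k*(q+1) = k*q + k := by ring
    have e1 : k*q + s = k*(q+1) + (s - k) := by omega
    have e2 : k*q + (s+1) = k*(q+1) + (s + 1 - k) := by omega
    rw [e1, e2, cycDiv hk1 (q+1) (by omega), cycDiv hk1 (q+1) (by omega)]

lemma prod_cycle (hk1 : 1 ≤ k) (a : ℕ → ℝ) (N : ℕ) :
    ∏ n ∈ Finset.Icc 1 N, a n
      = ∏ r ∈ Finset.range k, ∏ t ∈ Finset.range ((N + k - 1 - r)/k), a (k*t + r + 1) := by
  induction N with
  | zero =>
    rw [show Finset.Icc 1 0 = ∅ by rfl, Finset.prod_empty]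
    refine (Finset.prod_eq_one fun r hr => ?_).symm
    rw [cycle_count_base hk1 (Finset.mem_range.1 hr), Finset.range_zero, Finset.prod_empty]
  | succ N ih =>
    rw [Finset.prod_Icc_succ_top (by omega : 1 ≤ N + 1), ih]
    have hr0 : N % k ∈ Finset.range k := Finset.mem_range.2 (Nat.mod_lt N (by omega))
    rw [← Finset.mul_prod_erase _ (fun r => ∏ t ∈ Finset.range (((N+1) + k - 1 - r)/k),
        a (k*t + r + 1)) hr0,
      ← Finset.mul_prod_erase _ (fun r => ∏ t ∈ Finset.range ((N + k - 1 - r)/k),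
        a (k*t + r + 1)) hr0]
    have he : ∏ r ∈ (Finset.range k).erase (N % k),
        ∏ t ∈ Finset.range (((N+1) + k - 1 - r)/k), a (k*t + r + 1)
        = ∏ r ∈ (Finset.range k).erase (N % k),
        ∏ t ∈ Finset.range ((N + k - 1 - r)/k), a (k*t + r + 1) := by
      refine Finset.prod_congr rfl fun r hr => ?_
      obtain ⟨hne, hrk⟩ := Finset.mem_erase.1 hr
      rw [cycle_count_succ_other hk1 N (Finset.mem_range.1 hrk) hne]
    have h0 : ∏ t ∈ Finset.range (((N+1) + k - 1 - (N % k))/k), a (k*t + (N % k) + 1)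
        = (∏ t ∈ Finset.range ((N + k - 1 - (N % k))/k), a (k*t + (N % k) + 1)) * a (N+1) := by
      rw [cycle_count_succ_same hk1 N, Finset.prod_range_succ, cycle_count_same hk1 N]
      congr 2
      obtain ⟨q, r0, hr0k, hN, hdiv, hmod⟩ := cycle_decomp hk1 N
      rw [hdiv, hmod]
      omega
    rw [he, h0]
    ring

lemma cycle_count_le (hk1 : 2 ≤ k) (N : ℕ) {r : ℕ} (hr : r < k) : (N + k - 1 - r)/k ≤ N := by
  calc (N + k - 1 - r)/k ≤ (N + k - 1)/k := Nat.div_le_div_right (by omega)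
    _ ≤ N := by
      rw [Nat.div_le_iff_le_mul_add_pred (by omega)]
      have h1 : N * 1 ≤ N * k := Nat.mul_le_mul_left N (by omega)
      have h2 : N * k = k * N := Nat.mul_comm N k
      omega

end Chunk7
section Chunk8
open Finset
variable {m k h : ℕ}

lemma pup_wealth_pos (hm : 2 ≤ m) (hk1 : 1 ≤ k) {x : ℕ → Fin m → ℝ}
    (hx : ∀ i, 1 ≤ i → ∀ j, 0 < x i j) (N : ℕ) :
    0 < ∏ i ∈ Finset.Icc 1 N, dot (kPUP k (uniformSimplex m) x i) (x i) :=
  Finset.prod_pos fun i hi =>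
    kPUP_factor_pos hm hk1 hx i (Finset.mem_Icc.1 hi).1

lemma cyc_wealth_pos (hh : 1 ≤ h) {x : ℕ → Fin m → ℝ}
    (hx : ∀ i, 1 ≤ i → ∀ j, 0 < x i j) {B : ℕ → Fin m → ℝ}
    (hB : ∀ r < h, B r ∈ simplex m) (N : ℕ) : 0 < cyclicWealth h B x N := by
  refine Finset.prod_pos fun i hi => ?_
  have h1 := (Finset.mem_Icc.1 hi).1
  exact dot_pos (hB _ (Nat.mod_lt _ (by omega))) fun j => hx _ h1 j

/-- Main regret bound. -/
lemma main_bound (hm : 2 ≤ m) (hk : 2 ≤ k) (hh : 1 ≤ h) (hdvd : h ∣ k)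
    {x : ℕ → Fin m → ℝ} (hx : ∀ i, 1 ≤ i → ∀ j, 0 < x i j)
    {B : ℕ → Fin m → ℝ} (hB : ∀ r < h, B r ∈ simplex m) (N : ℕ) :
    cyclicWealth h B x N
      ≤ (2*(m:ℝ)*(2*(N:ℝ)+2)^(m-1))^k
        * ∏ i ∈ Finset.Icc 1 N, dot (kPUP k (uniformSimplex m) x i) (x i) := by
  have hk1 : 1 ≤ k := by omega
  have hm2 : (2:ℝ) ≤ (m:ℝ) := by exact_mod_cast hm
  have hNnn : (0:ℝ) ≤ (N:ℝ) := Nat.cast_nonneg N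
  set CN : ℝ := 2*(m:ℝ)*(2*(N:ℝ)+2)^(m-1) with hCN
  have hbase1 : (1:ℝ) ≤ 2*(N:ℝ)+2 := by linarith
  have hpow1 : (1:ℝ) ≤ (2*(N:ℝ)+2)^(m-1) := one_le_pow₀ hbase1
  have hCN1 : (1:ℝ) ≤ CN := by rw [hCN]; nlinarith
  have hL : cyclicWealth h B x N
      = ∏ r ∈ Finset.range k, ∏ t ∈ Finset.range ((N + k - 1 - r)/k),
          dot (B ((k*t + r + 1 - 1) % h)) (x (k*t + r + 1)) := by
    rw [cyclicWealth]
    exact prod_cycle hk1 _ N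
  have hR : ∏ i ∈ Finset.Icc 1 N, dot (kPUP k (uniformSimplex m) x i) (x i)
      = ∏ r ∈ Finset.range k, Phi m k x r ((N + k - 1 - r)/k) :=
    prod_cycle hk1 _ N
  rw [hL, hR]
  have hBmod : ∀ (t r : ℕ), (k*t + r + 1 - 1) % h = r % h := by
    intro t r
    have h1 : k*t + r + 1 - 1 = k*t + r := by omega
    have h2 : (k*t) % h = 0 := Nat.mod_eq_zero_of_dvd (hdvd.mul_right t)
    rw [h1, Nat.add_mod, h2, zero_add, Nat.mod_mod_of_dvd r (dvd_refl h)]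
  have hres : ∀ r ∈ Finset.range k,
      ∏ t ∈ Finset.range ((N + k - 1 - r)/k),
        dot (B ((k*t + r + 1 - 1) % h)) (x (k*t + r + 1))
      ≤ CN * Phi m k x r ((N + k - 1 - r)/k) := by
    intro r hr
    have hrk := Finset.mem_range.1 hr
    have hBr : B (r % h) ∈ simplex m := hB _ (Nat.mod_lt _ (by omega))
    have hrw : ∏ t ∈ Finset.range ((N + k - 1 - r)/k),
        dot (B ((k*t + r + 1 - 1) % h)) (x (k*t + r + 1))
        = ∏ t ∈ Finset.range ((N + k - 1 - r)/k),
        dot (B (r % h)) (x (k*t + r + 1)) :=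
      Finset.prod_congr rfl fun t _ => by rw [hBmod]
    rw [hrw]
    set T := (N + k - 1 - r)/k with hT
    rcases Nat.eq_zero_or_pos T with hT0 | hT1
    · rw [hT0]
      simp only [Finset.range_zero, Finset.prod_empty]
      rw [Phi, Finset.range_zero, Finset.prod_empty, mul_one]
      exact hCN1
    · have hTN : T ≤ N := cycle_count_le hk N hrk
      have hTNr : (T:ℝ) ≤ (N:ℝ) := by exact_mod_cast hTN
      have hFF : FF m k x r T ≤ (m:ℝ) * Phi m k x r T := by
        have := FF_div_m_le_Phi hm hk1 hx hrk hT1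
        rw [div_le_iff₀ (by positivity : (0:ℝ) < (m:ℝ))] at this
        linarith [this]
      have hFFpos := FF_pos (k := k) hm hx r T
      have hPhipos := Phi_pos hm hk1 hx hrk T
      have hTpos : (0:ℝ) < (T:ℝ) := by exact_mod_cast hT1
      have hpow : (2*(T:ℝ))^(m-1) ≤ (2*(N:ℝ)+2)^(m-1) := by
        refine pow_le_pow_left₀ (by positivity) (by linarith) _
      calc ∏ t ∈ Finset.range T, dot (B (r % h)) (x (k*t + r + 1))
          ≤ 2 * (2*(T:ℝ))^(m-1) * FF m k x r T := wealth_le_FF hm hk1 hx hrk hBr hT1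
        _ ≤ 2 * (2*(N:ℝ)+2)^(m-1) * FF m k x r T := by
            refine mul_le_mul_of_nonneg_right ?_ hFFpos.le
            nlinarith
        _ ≤ 2 * (2*(N:ℝ)+2)^(m-1) * ((m:ℝ) * Phi m k x r T) := by
            refine mul_le_mul_of_nonneg_left hFF (by positivity)
        _ = CN * Phi m k x r T := by rw [hCN]; ring
  calc ∏ r ∈ Finset.range k, ∏ t ∈ Finset.range ((N + k - 1 - r)/k),
        dot (B ((k*t + r + 1 - 1) % h)) (x (k*t + r + 1))
      ≤ ∏ r ∈ Finset.range k, (CN * Phi m k x r ((N + k - 1 - r)/k)) := by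
        refine Finset.prod_le_prod (fun r hr => ?_) hres
        refine Finset.prod_nonneg fun t _ => ?_
        exact dot_nonneg (hB _ (Nat.mod_lt _ (by omega))) fun j => (hx _ (by omega) j).le
    _ = CN^k * ∏ r ∈ Finset.range k, Phi m k x r ((N + k - 1 - r)/k) := by
        rw [Finset.prod_mul_distrib, Finset.prod_const, Finset.card_range]

/-- The kPUP wealth is at most `m^N` times the uniform-portfolio wealth. -/
lemma pup_le_uniform (hm : 2 ≤ m) (hk1 : 1 ≤ k) {x : ℕ → Fin m → ℝ}
    (hx : ∀ i, 1 ≤ i → ∀ j, 0 < x i j) (N : ℕ) :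
    ∏ i ∈ Finset.Icc 1 N, dot (kPUP k (uniformSimplex m) x i) (x i)
      ≤ (m:ℝ)^N * ∏ i ∈ Finset.Icc 1 N, dot (fun _ => (m:ℝ)⁻¹) (x i) := by
  have hm0 : (0:ℝ) < (m:ℝ) := by positivity
  calc ∏ i ∈ Finset.Icc 1 N, dot (kPUP k (uniformSimplex m) x i) (x i)
      ≤ ∏ i ∈ Finset.Icc 1 N, ((m:ℝ) * dot (fun _ => (m:ℝ)⁻¹) (x i)) := by
        refine Finset.prod_le_prod (fun i hi => ?_) (fun i hi => ?_)
        · exact (kPUP_factor_pos hm hk1 hx i (Finset.mem_Icc.1 hi).1).le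
        · have h1 := kPUP_factor_le_sum hm hk1 hx i (Finset.mem_Icc.1 hi).1
          rw [dot_uniform]
          rw [show (m:ℝ) * ((m:ℝ)⁻¹ * ∑ j, x i j) = ((m:ℝ) * (m:ℝ)⁻¹) * ∑ j, x i j by ring,
            mul_inv_cancel₀ hm0.ne', one_mul]
          exact h1
    _ = (m:ℝ)^N * ∏ i ∈ Finset.Icc 1 N, dot (fun _ => (m:ℝ)⁻¹) (x i) := by
        rw [Finset.prod_mul_distrib, Finset.prod_const, Nat.card_Icc]
        norm_num

end Chunk8
section Chunk9
open Finset Real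

lemma tendsto_bound (m k : ℕ) (hm : 2 ≤ m) :
    Filter.Tendsto (fun n : ℕ => (n:ℝ)⁻¹ * Real.log ((2*(m:ℝ)*(2*(n:ℝ)+2)^(m-1))^k))
      Filter.atTop (nhds 0) := by
  have hm0 : (0:ℝ) < (m:ℝ) := by positivity
  have hrw : ∀ n : ℕ, (n:ℝ)⁻¹ * Real.log ((2*(m:ℝ)*(2*(n:ℝ)+2)^(m-1))^k)
      = (k:ℝ) * Real.log (2*(m:ℝ)) * (n:ℝ)⁻¹
        + ((k:ℝ) * ((m:ℕ) - 1 : ℕ)) * (Real.log (2*(n:ℝ)+2) * (n:ℝ)⁻¹) := by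
    intro n
    have hc : (0:ℝ) < 2*(n:ℝ)+2 := by positivity
    rw [Real.log_pow, Real.log_mul (by positivity) (by positivity), Real.log_pow]
    ring
  have hT2 : Filter.Tendsto (fun n : ℕ => Real.log (2*(n:ℝ)+2) * (n:ℝ)⁻¹)
      Filter.atTop (nhds 0) := by
    have h2 : Filter.Tendsto (fun y : ℝ => 2*y+2) Filter.atTop Filter.atTop := by
      apply Filter.tendsto_atTop_add_const_right
      exact (tendsto_id (α := ℝ)).const_mul_atTop two_pos
    have h3 := Real.isLittleO_log_id_atTop.comp_tendsto h2
    have h4 : (fun y : ℝ => 2*y+2) =O[Filter.atTop] (fun y : ℝ => y) := by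
      refine Asymptotics.IsBigO.of_bound 4 ?_
      filter_upwards [Filter.eventually_ge_atTop (1:ℝ)] with y hy
      rw [Real.norm_eq_abs, Real.norm_eq_abs, abs_of_pos (by linarith), abs_of_pos (by linarith)]
      linarith
    have h5 : (fun y : ℝ => Real.log (2*y+2)) =o[Filter.atTop] (fun y : ℝ => y) := by
      refine Asymptotics.IsLittleO.trans_isBigO ?_ h4
      exact h3
    have h6 := h5.tendsto_div_nhds_zero
    have h7 := h6.comp (tendsto_natCast_atTop_atTop (R := ℝ))
    simp only [Function.comp, div_eq_mul_inv] at h7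
    exact h7
  have hT1 := tendsto_inv_atTop_nhds_zero_nat (𝕜 := ℝ)
  have := ((hT1.const_mul ((k:ℝ) * Real.log (2*(m:ℝ)))).add
    (hT2.const_mul ((k:ℝ) * ((m:ℕ) - 1 : ℕ))))
  simp only [mul_zero, add_zero] at this
  refine Filter.Tendsto.congr (fun n => ?_) this
  rw [hrw n]
end Chunk9

/-- Corollary 1, second part. If `h ∣ k` with `k ≥ 2`, then for the
`k`-parallel Universal Portfolio strategy with the uniform density on the simplex and every
infinite sequence of return vectors with positive entries,
`limsup_{n → ∞} max_{(b^1,...,b^h)} (W_n(b_n^h) - W_n(b_n)) ≤ 0`. -/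
theorem kPUP_consistency_cyclic_of_dvd
    (m : ℕ) (hm : 2 ≤ m) (h k : ℕ) (hh : 1 ≤ h) (hk : 2 ≤ k) (hdvd : h ∣ k)
    (x : ℕ → Fin m → ℝ) (hx : ∀ i, 1 ≤ i → ∀ j, 0 < x i j) :
    Filter.limsup (fun n : ℕ =>
      sSup {w : ℝ | ∃ B : ℕ → Fin m → ℝ, (∀ r < h, B r ∈ simplex m) ∧
        w = (n : ℝ)⁻¹ * Real.log (cyclicWealth h B x n) -
            (n : ℝ)⁻¹ * Real.log (∏ i ∈ Finset.Icc 1 n, dot (kPUP k (uniformSimplex m) x i) (x i))})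
      Filter.atTop ≤ 0 := by
  have hk1 : 1 ≤ k := by omega
  have hm0 : (0:ℝ) < (m:ℝ) := by positivity
  set S : ℕ → Set ℝ := fun n => {w : ℝ | ∃ B : ℕ → Fin m → ℝ, (∀ r < h, B r ∈ simplex m) ∧
        w = (n : ℝ)⁻¹ * Real.log (cyclicWealth h B x n) -
            (n : ℝ)⁻¹ * Real.log (∏ i ∈ Finset.Icc 1 n,
              dot (kPUP k (uniformSimplex m) x i) (x i))} with hSdef
  set g : ℕ → ℝ := fun n => (n:ℝ)⁻¹ * Real.log ((2*(m:ℝ)*(2*(n:ℝ)+2)^(m-1))^k) with hgdef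
  have hCN1 : ∀ n : ℕ, (1:ℝ) ≤ 2*(m:ℝ)*(2*(n:ℝ)+2)^(m-1) := by
    intro n
    have hm2 : (2:ℝ) ≤ (m:ℝ) := by exact_mod_cast hm
    have hNnn : (0:ℝ) ≤ (n:ℝ) := Nat.cast_nonneg n
    have hpow1 : (1:ℝ) ≤ (2*(n:ℝ)+2)^(m-1) := one_le_pow₀ (by linarith)
    nlinarith
  have hg0 : ∀ n, 0 ≤ g n := by
    intro n
    refine mul_nonneg (by positivity) (Real.log_nonneg (one_le_pow₀ (hCN1 n)))
  -- every element of `S n` is at most `g n`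
  have hub : ∀ n, ∀ w ∈ S n, w ≤ g n := by
    rintro n w ⟨B, hB, rfl⟩
    rcases Nat.eq_zero_or_pos n with hn0 | hn1
    · subst hn0
      simp only [Nat.cast_zero, inv_zero, zero_mul, sub_zero]
      exact hg0 0
    · have hninv : (0:ℝ) ≤ (n:ℝ)⁻¹ := by positivity
      have hcycpos := cyc_wealth_pos hh hx hB n
      have hpuppos := pup_wealth_pos hm hk1 hx (k := k) n
      have hmain := main_bound hm hk hh hdvd hx hB n
      have hCNpos : (0:ℝ) < (2*(m:ℝ)*(2*(n:ℝ)+2)^(m-1))^k := by positivity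
      have hlog : Real.log (cyclicWealth h B x n)
          ≤ Real.log ((2*(m:ℝ)*(2*(n:ℝ)+2)^(m-1))^k)
            + Real.log (∏ i ∈ Finset.Icc 1 n, dot (kPUP k (uniformSimplex m) x i) (x i)) := by
        rw [← Real.log_mul hCNpos.ne' hpuppos.ne']
        exact Real.log_le_log hcycpos hmain
      calc (n : ℝ)⁻¹ * Real.log (cyclicWealth h B x n) -
            (n : ℝ)⁻¹ * Real.log (∏ i ∈ Finset.Icc 1 n,
              dot (kPUP k (uniformSimplex m) x i) (x i))
          = (n:ℝ)⁻¹ * (Real.log (cyclicWealth h B x n)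
            - Real.log (∏ i ∈ Finset.Icc 1 n, dot (kPUP k (uniformSimplex m) x i) (x i))) := by
            ring
        _ ≤ (n:ℝ)⁻¹ * Real.log ((2*(m:ℝ)*(2*(n:ℝ)+2)^(m-1))^k) := by
            refine mul_le_mul_of_nonneg_left (by linarith) hninv
  have hbdd : ∀ n, BddAbove (S n) := fun n => ⟨g n, fun w hw => hub n w hw⟩
  -- lower bound via the uniform strategy
  have hlow : ∀ n, -Real.log (m:ℝ) ≤ sSup (S n) := by
    intro n
    have hmem : ((n : ℝ)⁻¹ * Real.log (cyclicWealth h (fun _ _ => (m:ℝ)⁻¹) x n) -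
        (n : ℝ)⁻¹ * Real.log (∏ i ∈ Finset.Icc 1 n,
          dot (kPUP k (uniformSimplex m) x i) (x i))) ∈ S n :=
      ⟨fun _ _ => (m:ℝ)⁻¹, fun r _ => uniform_mem_simplex (by omega), rfl⟩
    refine le_trans ?_ (le_csSup (hbdd n) hmem)
    have hlogm : 0 ≤ Real.log (m:ℝ) := Real.log_nonneg (by exact_mod_cast by omega : (1:ℝ) ≤ m)
    rcases Nat.eq_zero_or_pos n with hn0 | hn1
    · subst hn0
      simp only [Nat.cast_zero, inv_zero, zero_mul, sub_zero]
      linarith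
    · have hninv : (0:ℝ) ≤ (n:ℝ)⁻¹ := by positivity
      have hcycU : cyclicWealth h (fun _ _ => (m:ℝ)⁻¹) x n
          = ∏ i ∈ Finset.Icc 1 n, dot (fun _ => (m:ℝ)⁻¹) (x i) := rfl
      have hBU : ∀ r < h, (fun _ _ => (m:ℝ)⁻¹ : ℕ → Fin m → ℝ) r ∈ simplex m :=
        fun r _ => uniform_mem_simplex (by omega)
      have hcycpos := cyc_wealth_pos hh hx hBU n
      have hpuppos := pup_wealth_pos hm hk1 hx (k := k) n
      have hple := pup_le_uniform hm hk1 hx (k := k) n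
      rw [← hcycU] at hple
      have hmpow : (0:ℝ) < (m:ℝ)^n := by positivity
      have hlog : Real.log (∏ i ∈ Finset.Icc 1 n, dot (kPUP k (uniformSimplex m) x i) (x i))
          ≤ (n:ℝ) * Real.log (m:ℝ) + Real.log (cyclicWealth h (fun _ _ => (m:ℝ)⁻¹) x n) := by
        rw [show ((n:ℝ) * Real.log (m:ℝ)) = Real.log ((m:ℝ)^n) by rw [Real.log_pow],
          ← Real.log_mul hmpow.ne' hcycpos.ne']
        exact Real.log_le_log hpuppos hple
      have hn1' : (1:ℝ) ≤ (n:ℝ) := by exact_mod_cast hn1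
      have hinvn : (n:ℝ)⁻¹ * (n:ℝ) = 1 := inv_mul_cancel₀ (by linarith)
      calc -Real.log (m:ℝ) = (n:ℝ)⁻¹ * (-(n:ℝ) * Real.log (m:ℝ)) := by
            rw [show (n:ℝ)⁻¹ * (-(n:ℝ) * Real.log (m:ℝ))
              = -(((n:ℝ)⁻¹ * (n:ℝ)) * Real.log (m:ℝ)) by ring, hinvn]
            ring
        _ ≤ (n : ℝ)⁻¹ * Real.log (cyclicWealth h (fun _ _ => (m:ℝ)⁻¹) x n) -
            (n : ℝ)⁻¹ * Real.log (∏ i ∈ Finset.Icc 1 n,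
              dot (kPUP k (uniformSimplex m) x i) (x i)) := by
            rw [show (n : ℝ)⁻¹ * Real.log (cyclicWealth h (fun _ _ => (m:ℝ)⁻¹) x n) -
              (n : ℝ)⁻¹ * Real.log (∏ i ∈ Finset.Icc 1 n,
                dot (kPUP k (uniformSimplex m) x i) (x i))
              = (n:ℝ)⁻¹ * (Real.log (cyclicWealth h (fun _ _ => (m:ℝ)⁻¹) x n)
                - Real.log (∏ i ∈ Finset.Icc 1 n,
                  dot (kPUP k (uniformSimplex m) x i) (x i))) by ring]
            refine mul_le_mul_of_nonneg_left (by linarith) hninv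
  -- conclude
  have hgt := tendsto_bound m k hm
  have h1 : Filter.limsup (fun n => sSup (S n)) Filter.atTop ≤ Filter.limsup g Filter.atTop := by
    refine Filter.limsup_le_limsup (Filter.Eventually.of_forall
        (fun n => Real.sSup_le (hub n) (hg0 n))) ?_ ?_
    · exact Filter.isCoboundedUnder_le_of_le Filter.atTop hlow
    · exact hgt.isBoundedUnder_le
  rwa [hgt.limsup_eq] at h1
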